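/- arXiv:1602.07267 — 10 statements merged into one kernel-verified Lean document; each statement's English description precedes it below -/
import Mathlib

section
/- For every triadic context K = (G, M, B, I), the operator h on the trisets of K is extensive and idempotent with respect to ⊑: for every triset t of K, t ⊑ h(t), and h(h(t)) = h(t) componentwise. -/
/-- A triadic context is given by sets (types) `G`, `M`, `B` and a ternary
incidence relation `I`.  A triset of the context is a triple `(X, Y, Z)` of
subsets with `X × Y × Z ⊆ I`. -/
def IsTriset {G M B : Type*} (I : G → M → B → Prop)
    (t : Set G × Set M × Set B) : Prop :=
  ∀ x ∈ t.1, ∀ y ∈ t.2.1, ∀ z ∈ t.2.2, I x y z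

/-- `t₁ ⊑ t₂` : the set of triples `X₁ × Y₁ × Z₁` is contained in `X₂ × Y₂ × Z₂`. -/
def TriLE {G M B : Type*} (s t : Set G × Set M × Set B) : Prop :=
  s.1 ×ˢ s.2.1 ×ˢ s.2.2 ⊆ t.1 ×ˢ t.2.1 ×ˢ t.2.2

/-- The operator `h` of Trabelsi et al. -/
def hOp {G M B : Type*} (I : G → M → B → Prop)
    (t : Set G × Set M × Set B) : Set G × Set M × Set B :=
  let U : Set G := {g | ∀ m ∈ t.2.1, ∀ b ∈ t.2.2, I g m b}
  let V : Set M := {m | ∀ g ∈ U, ∀ b ∈ t.2.2, I g m b}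
  let W : Set B := {b | ∀ g ∈ U, ∀ m ∈ V, I g m b}
  (U, V, W)

/-- A triconcept is a triset maximal w.r.t. componentwise inclusion among trisets. -/
def IsTriconcept {G M B : Type*} (I : G → M → B → Prop)
    (t : Set G × Set M × Set B) : Prop :=
  IsTriset I t ∧ ∀ s : Set G × Set M × Set B,
    IsTriset I s → t.1 ⊆ s.1 → t.2.1 ⊆ s.2.1 → t.2.2 ⊆ s.2.2 → s = t

/-- A switching generator: the componentwise intersection of two distinct
triconcepts, having at least one nonempty component. -/
def IsSwitchGen {G M B : Type*} (I : G → M → B → Prop)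
    (s : Set G × Set M × Set B) : Prop :=
  ∃ c₁ c₂ : Set G × Set M × Set B, IsTriconcept I c₁ ∧ IsTriconcept I c₂ ∧ c₁ ≠ c₂ ∧
    s = (c₁.1 ∩ c₂.1, c₁.2.1 ∩ c₂.2.1, c₁.2.2 ∩ c₂.2.2) ∧
    (s.1.Nonempty ∨ s.2.1.Nonempty ∨ s.2.2.Nonempty)

/-- for every triadic context K = (G, M, B, I), the operator h is
extensive and idempotent with respect to the triset order: for every triset t,
t is below h(t), and h(h(t)) = h(t) componentwise. -/
theorem h_extensive_idempotent {G M B : Type*} (I : G → M → B → Prop)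
    (t : Set G × Set M × Set B) (ht : IsTriset I t) :
    TriLE t (hOp I t) ∧ hOp I (hOp I t) = hOp I t := by
  obtain ⟨X, Y, Z⟩ := t
  simp only [IsTriset] at ht
  set U : Set G := {g | ∀ m ∈ Y, ∀ b ∈ Z, I g m b} with hU
  set V : Set M := {m | ∀ g ∈ U, ∀ b ∈ Z, I g m b} with hV
  set W : Set B := {b | ∀ g ∈ U, ∀ m ∈ V, I g m b} with hW
  have hYV : Y ⊆ V := fun y hy g hg b hb => hg y hy b hb
  have hZW : Z ⊆ W := fun z hz g hg m hm => hm g hg z hz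
  have hh : hOp I (X, Y, Z) = (U, V, W) := rfl
  constructor
  · rintro ⟨x, y, z⟩ ⟨hx, hy, hz⟩
    rw [hh]
    exact ⟨fun m hm b hb => ht x hx m hm b hb, hYV hy, hZW hz⟩
  · rw [hh]
    have hU' : {g | ∀ m ∈ V, ∀ b ∈ W, I g m b} = U := by
      ext g
      constructor
      · intro h m hm b hb
        exact h m (hYV hm) b (hZW hb)
      · intro h m hm b hb
        exact hb g h m hm
    have hV' : {m | ∀ g ∈ U, ∀ b ∈ W, I g m b} = V := by
      ext m
      constructor
      · intro h g hg b hb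
        exact h g hg b (hZW hb)
      · intro h g hg b hb
        exact hb g hg m h
    simp only [hOp]
    rw [hU', hV']
end

section
/- For every triadic context K = (G, M, B, I), a triset t of K satisfies h(t) = t (componentwise) if and only if t is a triconcept of K. -/
/-- a triset t of K satisfies h(t) = t (componentwise) if and only
if t is a triconcept of K. -/
theorem h_fixpoint_iff_triconcept {G M B : Type*} (I : G → M → B → Prop)
    (t : Set G × Set M × Set B) (ht : IsTriset I t) :
    hOp I t = t ↔ IsTriconcept I t := by
  obtain ⟨X, Y, Z⟩ := t
  constructor
  · intro h
    refine ⟨ht, fun s hs h1 h2 h3 => ?_⟩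
    have hU : X = {g | ∀ m ∈ Y, ∀ b ∈ Z, I g m b} := (congrArg Prod.fst h).symm
    have hV : Y = {m | ∀ g ∈ ({g | ∀ m ∈ Y, ∀ b ∈ Z, I g m b} : Set G),
        ∀ b ∈ Z, I g m b} := (congrArg (fun p => p.2.1) h).symm
    have hW : Z = {b | ∀ g ∈ ({g | ∀ m ∈ Y, ∀ b ∈ Z, I g m b} : Set G),
        ∀ m ∈ ({m | ∀ g ∈ ({g | ∀ m ∈ Y, ∀ b ∈ Z, I g m b} : Set G), ∀ b ∈ Z, I g m b} : Set M),
        I g m b} := (congrArg (fun p => p.2.2) h).symm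
    obtain ⟨A, C, D⟩ := s
    simp only [Prod.mk.injEq]
    refine ⟨?_, ?_, ?_⟩
    · apply Set.Subset.antisymm _ h1
      intro g hg
      rw [hU]
      exact fun m hm b hb => hs g hg m (h2 hm) b (h3 hb)
    · apply Set.Subset.antisymm _ h2
      intro m hm
      rw [hV]
      intro g hg b hb
      have hgX : g ∈ X := by rw [hU]; exact hg
      exact hs g (h1 hgX) m hm b (h3 hb)
    · apply Set.Subset.antisymm _ h3
      intro b hb
      rw [hW]
      intro g hg m hm
      have hgX : g ∈ X := by rw [hU]; exact hg
      have hmY : m ∈ Y := by rw [hV]; exact hm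
      exact hs g (h1 hgX) m (h2 hmY) b hb
  · rintro ⟨-, hmax⟩
    apply hmax
    · rintro g hg m hm b hb
      exact hb g hg m hm
    · intro g hg
      exact fun m hm b hb => ht g hg m hm b hb
    · intro m hm g hg b hb
      exact hg m hm b hb
    · intro b hb g hg m hm
      exact hm g hg b hb
end

section
/- For every triadic context K = (G, M, B, I) and every triset t of K, the triple h(t) is a triconcept of K. -/
/-- for every triset t of K, the triple h(t) is a triconcept of K. -/
theorem h_maps_to_triconcepts {G M B : Type*} (I : G → M → B → Prop)
    (t : Set G × Set M × Set B) (ht : IsTriset I t) :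
    IsTriconcept I (hOp I t) := by
  set U : Set G := {g | ∀ m ∈ t.2.1, ∀ b ∈ t.2.2, I g m b} with hU
  set V : Set M := {m | ∀ g ∈ U, ∀ b ∈ t.2.2, I g m b} with hV
  set W : Set B := {b | ∀ g ∈ U, ∀ m ∈ V, I g m b} with hW
  have hEq : hOp I t = (U, V, W) := rfl
  rw [hEq]
  have hYV : t.2.1 ⊆ V := fun m hm g hg b hb => hg m hm b hb
  have hZW : t.2.2 ⊆ W := fun b hb g hg m hm => hm g hg b hb
  constructor
  · intro g hg m hm b hb
    exact hb g hg m hm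
  · rintro ⟨X', Y', Z'⟩ hs h1 h2 h3
    have hXU : X' ⊆ U := fun g hg m hm b hb =>
      hs g hg m (h2 (hYV hm)) b (h3 (hZW hb))
    have hYV' : Y' ⊆ V := fun m hm g hg b hb =>
      hs g (h1 hg) m hm b (h3 (hZW hb))
    have hZW' : Z' ⊆ W := fun b hb g hg m hm =>
      hs g (h1 hg) m (h2 hm) b hb
    simp only [Prod.mk.injEq]
    exact ⟨subset_antisymm hXU h1, subset_antisymm hYV' h2, subset_antisymm hZW' h3⟩
end

section
/- Let K = (G, M, B, I) be a triadic context possessing two triconcepts c₁ = (X, Y₁, Z₁) and c₂ = (X, Y₂, Z₂) with the same first component such that Y₁ ⊊ Y₂, Z₂ ⊊ Z₁, and X, Y₁, Z₂ are all nonempty. Then h is not monotone on the trisets of K with respect to ⊑: there exist trisets s and t of K with s ⊑ t and ¬(h(s) ⊑ h(t)). -/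
lemma hOp_fixed {G M B : Type*} (I : G → M → B → Prop)
    (c : Set G × Set M × Set B) (hc : IsTriconcept I c) : hOp I c = c := by
  obtain ⟨hts, hmax⟩ := hc
  apply hmax
  · rintro x hx y hy z hz
    exact hz x hx y hy
  · intro g hg m hm b hb
    exact hts g hg m hm b hb
  · intro m hm g hg b hb
    exact hg m hm b hb
  · intro b hb g hg m hm
    exact hm g hg b hb

/-- if K has two triconcepts (X, Y1, Z1) and (X, Y2, Z2) with the
same first component such that Y1 is strictly contained in Y2, Z2 strictly in
Z1, and X, Y1, Z2 are all nonempty, then h is not monotone on the trisets of K: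
there are trisets s, t with s below t but h(s) not below h(t). -/
theorem h_not_monotone {G M B : Type*} (I : G → M → B → Prop)
    (X : Set G) (Y1 Y2 : Set M) (Z1 Z2 : Set B)
    (hc1 : IsTriconcept I (X, Y1, Z1)) (hc2 : IsTriconcept I (X, Y2, Z2))
    (hY : Y1 ⊂ Y2) (hZ : Z2 ⊂ Z1)
    (hXne : X.Nonempty) (hY1ne : Y1.Nonempty) (hZ2ne : Z2.Nonempty) :
    ∃ s t : Set G × Set M × Set B, IsTriset I s ∧ IsTriset I t ∧ TriLE s t ∧
      ¬ TriLE (hOp I s) (hOp I t) := by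
  refine ⟨(∅, Y2, Z2), (∅, Y1, Z1), ?_, ?_, ?_, ?_⟩
  · rintro x ⟨⟩
  · rintro x ⟨⟩
  · rintro ⟨x, y, z⟩ ⟨⟨⟩, -⟩
  · have h2 : hOp I ((∅ : Set G), Y2, Z2) = (X, Y2, Z2) := by
      have : hOp I ((∅ : Set G), Y2, Z2) = hOp I (X, Y2, Z2) := rfl
      rw [this, hOp_fixed I _ hc2]
    have h1 : hOp I ((∅ : Set G), Y1, Z1) = (X, Y1, Z1) := by
      have : hOp I ((∅ : Set G), Y1, Z1) = hOp I (X, Y1, Z1) := rfl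
      rw [this, hOp_fixed I _ hc1]
    rw [h1, h2]
    obtain ⟨m, hmY2, hmY1⟩ := Set.exists_of_ssubset hY
    obtain ⟨x, hx⟩ := hXne
    obtain ⟨b, hb⟩ := hZ2ne
    intro hle
    have := hle (show (x, m, b) ∈ X ×ˢ Y2 ×ˢ Z2 from ⟨hx, hmY2, hb⟩)
    exact hmY1 this.2.1
end

section
/- Let (G, M, I) be a finite dyadic formal context. Every Ferrers relation R with R ⊆ I is contained in a Ferrers relation of concepts of (G, M, I). -/
/-- The intent of a set of objects in a dyadic formal context. -/
def intentOf {G M : Type*} (I : Set (G × M)) (A : Set G) : Set M :=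
  {m | ∀ g ∈ A, (g, m) ∈ I}

/-- The extent of a set of attributes in a dyadic formal context. -/
def extentOf {G M : Type*} (I : Set (G × M)) (B : Set M) : Set G :=
  {g | ∀ m ∈ B, (g, m) ∈ I}

/-- A formal concept of a dyadic context. -/
def IsConcept {G M : Type*} (I : Set (G × M)) (A : Set G) (B : Set M) : Prop :=
  intentOf I A = B ∧ extentOf I B = A

/-- A Ferrers relation: a union of a chain of rectangles with increasing first
components and decreasing second components. -/
def IsFerrers {G M : Type*} (R : Set (G × M)) : Prop :=
  ∃ (n : ℕ) (A : Fin n → Set G) (B : Fin n → Set M),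
    Monotone A ∧ Antitone B ∧ R = ⋃ i, A i ×ˢ B i

/-- A Ferrers relation of concepts of the context (G, M, I): a union of
rectangles coming from a chain of formal concepts of (G, M, I). -/
def IsFerrersOfConcepts {G M : Type*} (I R : Set (G × M)) : Prop :=
  ∃ (n : ℕ) (A : Fin n → Set G) (B : Fin n → Set M),
    (∀ i, IsConcept I (A i) (B i)) ∧ Monotone A ∧ R = ⋃ i, A i ×ˢ B i

lemma subset_extent_intent {G M : Type*} (I : Set (G × M)) (A : Set G) :
    A ⊆ extentOf I (intentOf I A) := fun g hg m hm => hm g hg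

lemma intent_antitone {G M : Type*} (I : Set (G × M)) :
    Antitone (intentOf I) := fun A B h m hm g hg => hm g (h hg)

lemma extent_antitone {G M : Type*} (I : Set (G × M)) :
    Antitone (extentOf I) := fun A B h g hg m hm => hg m (h hm)

lemma intent_extent_intent {G M : Type*} (I : Set (G × M)) (A : Set G) :
    intentOf I (extentOf I (intentOf I A)) = intentOf I A := by
  apply le_antisymm
  · exact intent_antitone I (subset_extent_intent I A)
  · exact fun m hm g hg => hg m hm

/-- in a finite dyadic formal context (G, M, I), every Ferrers
relation contained in I is contained in a Ferrers relation of concepts of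
(G, M, I). -/
theorem ferrers_subset_ferrers_of_concepts {G M : Type*} [Fintype G] [Fintype M]
    (I R : Set (G × M)) (hR : IsFerrers R) (hRI : R ⊆ I) :
    ∃ R' : Set (G × M), IsFerrersOfConcepts I R' ∧ R ⊆ R' := by
  obtain ⟨n, A, B, hA, hB, hReq⟩ := hR
  refine ⟨⋃ i, (extentOf I (intentOf I (A i))) ×ˢ (intentOf I (A i)),
    ⟨n, _, _, fun i => ⟨intent_extent_intent I (A i), rfl⟩,
      fun i j hij => extent_antitone I (intent_antitone I (hA hij)), rfl⟩, ?_⟩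
  rw [hReq]
  refine Set.iUnion_mono fun i => Set.prod_mono (subset_extent_intent I (A i)) ?_
  intro m hm g hg
  exact hRI (hReq ▸ Set.mem_iUnion.2 ⟨i, ⟨hg, hm⟩⟩)
end

section
/- Let D be a multi-relational database and let ℋ be a family of at least two pairwise distinct maximal complete connected subsets (MCCSs) of D such that X = ⋂_{H ∈ ℋ} H is nonempty and is itself a complete connected subset. Then g(X) = X, yet X is not a maximal complete connected subset. -/
/-- A multi-relational database over a finite entity set E: entities are
partitioned into k types by t; RT is the set of relationship types (unordered
pairs of distinct types); rel is the union of the binary relationships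
(unordered pairs of entities whose pair of types is a relationship type). -/
structure MRD (E : Type*) (k : ℕ) where
  t : E → Fin k
  RT : Set (Sym2 (Fin k))
  RT_not_diag : ∀ p ∈ RT, ¬ p.IsDiag
  rel : Set (Sym2 E)
  rel_types : ∀ p ∈ rel, p.map t ∈ RT

namespace MRD

variable {E : Type*} {k : ℕ}

/-- A set F is complete if any two of its entities whose pair of types is a
relationship type are related. -/
def Complete (D : MRD E k) (F : Set E) : Prop :=
  ∀ e ∈ F, ∀ e' ∈ F, s(D.t e, D.t e') ∈ D.RT → s(e, e') ∈ D.rel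

/-- A set F is connected if any two of its elements are joined by a path inside
F whose consecutive elements form pairs in rel. -/
def Connected (D : MRD E k) (F : Set E) : Prop :=
  ∀ e ∈ F, ∀ e' ∈ F,
    Relation.ReflTransGen (fun a b => a ∈ F ∧ b ∈ F ∧ s(a, b) ∈ D.rel) e e'

/-- A complete connected subset. -/
def CCS (D : MRD E k) (F : Set E) : Prop :=
  D.Complete F ∧ D.Connected F

/-- A maximal complete connected subset: a CCS to which no element can be added
remaining a CCS. -/
def MCCS (D : MRD E k) (F : Set E) : Prop :=
  D.CCS F ∧ ∀ e : E, D.CCS (insert e F) → e ∈ F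

/-- Comp(F): the entities whose addition keeps F complete. -/
def Comp (D : MRD E k) (F : Set E) : Set E :=
  {e | D.Complete (insert e F)}

/-- Aug(F): the entities whose addition keeps F a CCS. -/
def Aug (D : MRD E k) (F : Set E) : Set E :=
  {e | D.CCS (insert e F)}

/-- The operator g. -/
def g (D : MRD E k) (F : Set E) : Set E :=
  {e ∈ D.Aug F | D.Comp (insert e F) = D.Comp F}

end MRD

/-!
Every `F ∈ ℋ` contains `X`, and a complete `F ⊇ X` lies in `Comp X`. If `e ∈ g(X)` then
`Comp (X ∪ {e}) = Comp X ⊇ F`, so `e` is compatible with all of `F`, and `e` is linked to `X ⊆ F`;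
hence `F ∪ {e}` is a CCS and maximality of `F` puts `e` in `F`. So `g(X) ⊆ ⋂ ℋ = X`.
Since `ℋ` has two distinct members, `X` is a proper subset of one of them, `F`; a path inside the
connected `F` from a point outside `X` to a point of `X` leaves `X` along an edge `{e, y}` with
`y ∈ X`, and `X ∪ {e} ⊆ F` is then a strictly larger CCS.
-/

namespace MRD

variable {E : Type*} {k : ℕ} {D : MRD E k} {A B F X : Set E} {a b e x y : E}

/-- The path relation of `Connected`: `D.Connected F` is by definition
`∀ e ∈ F, ∀ e' ∈ F, D.Linked F e e'`. -/
def Linked (D : MRD E k) (F : Set E) : E → E → Prop :=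
  Relation.ReflTransGen fun a b => a ∈ F ∧ b ∈ F ∧ s(a, b) ∈ D.rel

theorem Complete.mono (hB : D.Complete B) (hAB : A ⊆ B) : D.Complete A :=
  fun e he e' he' => hB e (hAB he) e' (hAB he')

theorem complete_insert_iff :
    D.Complete (insert e F) ↔
      D.Complete F ∧ ∀ f ∈ F, s(D.t e, D.t f) ∈ D.RT → s(e, f) ∈ D.rel := by
  refine ⟨fun h => ⟨h.mono (Set.subset_insert e F), fun f hf =>
    h e (Set.mem_insert e F) f (Set.mem_insert_of_mem e hf)⟩, ?_⟩
  rintro ⟨hF, he⟩ u (rfl | hu) v (rfl | hv) hrt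
  · exact absurd (D.RT_not_diag _ hrt) (by simp)
  · exact he v hv hrt
  · rw [Sym2.eq_swap] at hrt ⊢
    exact he u hu hrt
  · exact hF u hu v hv hrt

theorem Complete.subset_comp (hF : D.Complete F) (hXF : X ⊆ F) : F ⊆ D.Comp X :=
  fun _ hf => hF.mono (Set.insert_subset hf hXF)

theorem Linked.mono (h : D.Linked A a b) (hAB : A ⊆ B) : D.Linked B a b :=
  Relation.ReflTransGen.mono (fun _ _ ⟨ha, hb, hab⟩ => ⟨hAB ha, hAB hb, hab⟩) _ _ h

theorem Linked.symm (h : D.Linked F a b) : D.Linked F b a :=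
  Relation.ReflTransGen.mono (fun _ _ ⟨ha, hb, hab⟩ => ⟨hb, ha, by rwa [Sym2.eq_swap]⟩) _ _
    (Relation.reflTransGen_swap.2 h)

theorem linked_of_rel (ha : a ∈ F) (hb : b ∈ F) (hab : s(a, b) ∈ D.rel) : D.Linked F a b :=
  Relation.ReflTransGen.single ⟨ha, hb, hab⟩

theorem Connected.insert_of_linked (hF : D.Connected F) (hx : x ∈ F)
    (he : D.Linked (insert e F) e x) : D.Connected (insert e F) := by
  have hreach : ∀ a ∈ insert e F, D.Linked (insert e F) a x := by
    rintro a (rfl | ha)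
    · exact he
    · exact Linked.mono (hF a ha x hx) (Set.subset_insert e F)
  exact fun u hu v hv => Relation.ReflTransGen.trans (hreach u hu) (hreach v hv).symm

theorem Linked.exists_rel_of_notMem_of_mem (h : D.Linked F a b) (ha : a ∉ X) (hb : b ∈ X) :
    ∃ e ∈ F \ X, ∃ y ∈ X, s(e, y) ∈ D.rel := by
  induction h using Relation.ReflTransGen.head_induction_on with
  | refl => exact absurd hb ha
  | @head a c hac _ ih =>
    by_cases hc : c ∈ X
    · exact ⟨a, ⟨hac.1, ha⟩, c, hc, hac.2.2⟩
    · exact ih hc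

theorem Connected.exists_rel_of_ssubset (hF : D.Connected F) (hXF : X ⊂ F)
    (hX : X.Nonempty) : ∃ e ∈ F \ X, ∃ y ∈ X, s(e, y) ∈ D.rel := by
  obtain ⟨x, hx⟩ := hX
  obtain ⟨a, haF, haX⟩ := Set.exists_of_ssubset hXF
  exact Linked.exists_rel_of_notMem_of_mem (hF a haF x (hXF.subset hx)) haX hx

theorem not_MCCS_of_ssubset (hF : D.CCS F) (hXF : X ⊂ F) (hX : X.Nonempty) : ¬ D.MCCS X := by
  rintro ⟨hXccs, hmax⟩
  obtain ⟨e, ⟨heF, heX⟩, y, hy, hey⟩ := hF.2.exists_rel_of_ssubset hXF hX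
  refine heX (hmax e ⟨hF.1.mono (Set.insert_subset heF hXF.subset), ?_⟩)
  exact hXccs.2.insert_of_linked hy
    (linked_of_rel (Set.mem_insert e X) (Set.mem_insert_of_mem e hy) hey)

theorem self_subset_g (hX : D.CCS X) : X ⊆ D.g X := by
  intro e he
  have hins : insert e X = X := Set.insert_eq_self.mpr he
  exact ⟨show D.CCS (insert e X) by rwa [hins], by rw [hins]⟩

theorem MCCS.mem_of_mem_g (hF : D.MCCS F) (hXF : X ⊆ F) (hx : x ∈ X) (he : e ∈ D.g X) :
    e ∈ F := by
  obtain ⟨haug, hcomp⟩ := he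
  refine hF.2 e ⟨complete_insert_iff.2 ⟨hF.1.1, fun f hf hrt => ?_⟩, ?_⟩
  · have hf' : f ∈ D.Comp (insert e X) := hcomp ▸ hF.1.1.subset_comp hXF hf
    exact hf' e (Set.mem_insert_of_mem f (Set.mem_insert e X)) f (Set.mem_insert f _) hrt
  · exact hF.1.2.insert_of_linked (hXF hx) <| Linked.mono
      (haug.2 e (Set.mem_insert e X) x (Set.mem_insert_of_mem e hx))
      (Set.insert_subset_insert hXF)

end MRD

open MRD in
theorem g_fixpoint_not_maximal_general {E : Type*} {k : ℕ} (D : MRD E k)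
    (H : Set (Set E)) (hH : ∀ F ∈ H, D.MCCS F)
    (htwo : ∃ F₁ ∈ H, ∃ F₂ ∈ H, F₁ ≠ F₂)
    (X : Set E) (hX : X = ⋂₀ H) (hXne : X.Nonempty) (hXccs : D.CCS X) :
    D.g X = X ∧ ¬ D.MCCS X := by
  have hXsub : ∀ F ∈ H, X ⊆ F := fun F hF => hX ▸ Set.sInter_subset_of_mem hF
  obtain ⟨x, hx⟩ := hXne
  refine ⟨Set.Subset.antisymm (fun e he => ?_) (self_subset_g hXccs), ?_⟩
  · rw [hX]
    exact Set.mem_sInter.2 fun F hF => (hH F hF).mem_of_mem_g (hXsub F hF) hx he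
  · obtain ⟨F₁, hF₁, F₂, hF₂, hne⟩ := htwo
    obtain ⟨F, hF, hXF⟩ : ∃ F ∈ H, X ≠ F := by
      by_contra! h
      exact hne ((h F₁ hF₁).symm.trans (h F₂ hF₂))
    exact not_MCCS_of_ssubset (hH F hF).1 ((hXsub F hF).ssubset_of_ne hXF) ⟨x, hx⟩

/-- if H is a family of at least two pairwise distinct MCCSs of D
whose intersection X is nonempty and is itself a CCS, then g(X) = X, yet X is
not an MCCS. -/
theorem g_fixpoint_not_maximal {E : Type*} [Fintype E] {k : ℕ} (D : MRD E k)
    (H : Set (Set E)) (hH : ∀ F ∈ H, D.MCCS F)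
    (htwo : ∃ F₁ ∈ H, ∃ F₂ ∈ H, F₁ ≠ F₂)
    (X : Set E) (hX : X = ⋂₀ H) (hXne : X.Nonempty) (hXccs : D.CCS X) :
    D.g X = X ∧ ¬ D.MCCS X :=
  g_fixpoint_not_maximal_general D H hH htwo X hX hXne hXccs
end

section
/- For all permutations p and q of (1, 2, 3), every triadic context K = (K₁, K₂, K₃, I) and every triset t of K, σ_q(σ_p(t)) = σ_p(t); that is, σ_p(t) is a fixed point of every operator σ_q. -/
/-- Build the triple whose component at position p 0 is a, at p 1 is b and at
p 2 is c, for a permutation p of the three coordinates. -/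
def triAt {α : Type*} (p : Equiv.Perm (Fin 3)) (a b c : α) : Fin 3 → α :=
  fun n => if n = p 0 then a else if n = p 1 then b else c

/-- A triset of a triadic context I (coordinates indexed by Fin 3):
X₁ × X₂ × X₃ ⊆ I. -/
def IsTriset3 {α : Type*} (I : Set (Fin 3 → α)) (X : Fin 3 → Set α) : Prop :=
  ∀ f : Fin 3 → α, (∀ i, f i ∈ X i) → f ∈ I

/-- The operator σ_p for a permutation p = (i, j, k) of the coordinates:
Y_i = (X_j × X_k)^(i), Y_j = (Y_i × X_k)^(j), Y_k = (Y_i × Y_j)^(k). -/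
def sigmaOp {α : Type*} (p : Equiv.Perm (Fin 3)) (I : Set (Fin 3 → α))
    (X : Fin 3 → Set α) : Fin 3 → Set α :=
  let Yi : Set α := {a | ∀ b ∈ X (p 1), ∀ c ∈ X (p 2), triAt p a b c ∈ I}
  let Yj : Set α := {b | ∀ a ∈ Yi, ∀ c ∈ X (p 2), triAt p a b c ∈ I}
  let Yk : Set α := {c | ∀ a ∈ Yi, ∀ b ∈ Yj, triAt p a b c ∈ I}
  fun n => if n = p 0 then Yi else if n = p 1 then Yj else Yk

namespace SigmaAux
variable {α : Type*}

lemma ne10 (p : Equiv.Perm (Fin 3)) : p 1 ≠ p 0 := p.injective.ne (by decide)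
lemma ne20 (p : Equiv.Perm (Fin 3)) : p 2 ≠ p 0 := p.injective.ne (by decide)
lemma ne21 (p : Equiv.Perm (Fin 3)) : p 2 ≠ p 1 := p.injective.ne (by decide)

lemma perm_cases (p : Equiv.Perm (Fin 3)) (m : Fin 3) : m = p 0 ∨ m = p 1 ∨ m = p 2 := by
  obtain ⟨n, hn⟩ := p.surjective m
  fin_cases n <;> simp_all

lemma triAt0 (p : Equiv.Perm (Fin 3)) (a b c : α) : triAt p a b c (p 0) = a := if_pos rfl
lemma triAt1 (p : Equiv.Perm (Fin 3)) (a b c : α) : triAt p a b c (p 1) = b := by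
  simp [triAt, ne10 p]
lemma triAt2 (p : Equiv.Perm (Fin 3)) (a b c : α) : triAt p a b c (p 2) = c := by
  simp [triAt, ne20 p, ne21 p]

lemma triAt_eta (p : Equiv.Perm (Fin 3)) (f : Fin 3 → α) :
    triAt p (f (p 0)) (f (p 1)) (f (p 2)) = f := by
  funext m
  rcases perm_cases p m with h | h | h <;> subst h <;>
    simp [triAt0, triAt1, triAt2]

lemma sigma0 (p : Equiv.Perm (Fin 3)) (I : Set (Fin 3 → α)) (X : Fin 3 → Set α) :
    sigmaOp p I X (p 0) = {a | ∀ b ∈ X (p 1), ∀ c ∈ X (p 2), triAt p a b c ∈ I} := by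
  simp [sigmaOp]

lemma sigma1 (p : Equiv.Perm (Fin 3)) (I : Set (Fin 3 → α)) (X : Fin 3 → Set α) :
    sigmaOp p I X (p 1) =
      {b | ∀ a ∈ sigmaOp p I X (p 0), ∀ c ∈ X (p 2), triAt p a b c ∈ I} := by
  simp [sigmaOp, ne10 p]

lemma sigma2 (p : Equiv.Perm (Fin 3)) (I : Set (Fin 3 → α)) (X : Fin 3 → Set α) :
    sigmaOp p I X (p 2) =
      {c | ∀ a ∈ sigmaOp p I X (p 0), ∀ b ∈ sigmaOp p I X (p 1), triAt p a b c ∈ I} := by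
  simp [sigmaOp, ne10 p, ne20 p, ne21 p]

/-- A family Y is *full* when each component is the derivation of the others. -/
def Full (I : Set (Fin 3 → α)) (Y : Fin 3 → Set α) : Prop :=
  ∀ i x, x ∈ Y i ↔ ∀ f : Fin 3 → α, f i = x → (∀ m, m ≠ i → f m ∈ Y m) → f ∈ I

lemma full_fixed (q : Equiv.Perm (Fin 3)) (I : Set (Fin 3 → α)) (Y : Fin 3 → Set α)
    (h : Full I Y) : sigmaOp q I Y = Y := by
  have S0 : sigmaOp q I Y (q 0) = Y (q 0) := by
    rw [sigma0]
    ext x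
    rw [h (q 0) x]
    constructor
    · intro hx f hf0 hf
      rw [← triAt_eta q f, hf0]
      exact hx _ (hf _ (ne10 q)) _ (hf _ (ne20 q))
    · intro hx b hb c hc
      apply hx (triAt q x b c) (triAt0 q x b c)
      intro m hm
      rcases perm_cases q m with h' | h' | h'
      · exact absurd h' hm
      · subst h'; rw [triAt1]; exact hb
      · subst h'; rw [triAt2]; exact hc
  have S1 : sigmaOp q I Y (q 1) = Y (q 1) := by
    rw [sigma1, S0]
    ext x
    rw [h (q 1) x]
    constructor
    · intro hx f hf1 hf
      rw [← triAt_eta q f, hf1]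
      exact hx _ (hf _ (ne10 q).symm) _ (hf _ (ne21 q))
    · intro hx a ha c hc
      apply hx (triAt q a x c) (triAt1 q a x c)
      intro m hm
      rcases perm_cases q m with h' | h' | h'
      · subst h'; rw [triAt0]; exact ha
      · exact absurd h' hm
      · subst h'; rw [triAt2]; exact hc
  have S2 : sigmaOp q I Y (q 2) = Y (q 2) := by
    rw [sigma2, S0, S1]
    ext x
    rw [h (q 2) x]
    constructor
    · intro hx f hf2 hf
      rw [← triAt_eta q f, hf2]
      exact hx _ (hf _ (ne20 q).symm) _ (hf _ (ne21 q).symm)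
    · intro hx a ha b hb
      apply hx (triAt q a b x) (triAt2 q a b x)
      intro m hm
      rcases perm_cases q m with h' | h' | h'
      · subst h'; rw [triAt0]; exact ha
      · subst h'; rw [triAt1]; exact hb
      · exact absurd h' hm
  funext m
  rcases perm_cases q m with h' | h' | h' <;> subst h' <;> assumption

lemma full_sigma (p : Equiv.Perm (Fin 3)) (I : Set (Fin 3 → α)) (X : Fin 3 → Set α)
    (hX : IsTriset3 I X) : Full I (sigmaOp p I X) := by
  set Y := sigmaOp p I X with hY
  have sub1 : X (p 1) ⊆ Y (p 1) := by
    intro b hb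
    rw [hY, sigma1]
    intro a ha c hc
    rw [sigma0] at ha
    exact ha b hb c hc
  have sub2 : X (p 2) ⊆ Y (p 2) := by
    intro c hc
    rw [hY, sigma2]
    intro a ha b hb
    rw [sigma1] at hb
    exact hb a ha c hc
  have key : ∀ a ∈ Y (p 0), ∀ b ∈ Y (p 1), ∀ c ∈ Y (p 2), triAt p a b c ∈ I := by
    intro a ha b hb c hc
    rw [hY, sigma2] at hc
    exact hc a ha b hb
  intro i x
  rcases perm_cases p i with hi | hi | hi <;> subst hi
  · constructor
    · intro hx f hf0 hf
      rw [← triAt_eta p f, hf0]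
      exact key _ hx _ (hf _ (ne10 p)) _ (hf _ (ne20 p))
    · intro hx
      rw [hY, sigma0]
      intro b hb c hc
      apply hx (triAt p x b c) (triAt0 p x b c)
      intro m hm
      rcases perm_cases p m with h' | h' | h'
      · exact absurd h' hm
      · subst h'; rw [triAt1]; exact sub1 hb
      · subst h'; rw [triAt2]; exact sub2 hc
  · constructor
    · intro hx f hf1 hf
      rw [← triAt_eta p f, hf1]
      exact key _ (hf _ (ne10 p).symm) _ hx _ (hf _ (ne21 p))
    · intro hx
      rw [hY, sigma1]
      intro a ha c hc
      apply hx (triAt p a x c) (triAt1 p a x c)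
      intro m hm
      rcases perm_cases p m with h' | h' | h'
      · subst h'; rw [triAt0]; exact ha
      · exact absurd h' hm
      · subst h'; rw [triAt2]; exact sub2 hc
  · constructor
    · intro hx f hf2 hf
      rw [← triAt_eta p f, hf2]
      exact key _ (hf _ (ne20 p).symm) _ (hf _ (ne21 p).symm) _ hx
    · intro hx
      rw [hY, sigma2]
      intro a ha b hb
      exact hx (triAt p a b x) (triAt2 p a b x) (by
        intro m hm
        rcases perm_cases p m with h' | h' | h'
        · subst h'; rw [triAt0]; exact ha
        · subst h'; rw [triAt1]; exact hb
        · exact absurd h' hm)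

end SigmaAux

/-- for all permutations p, q of the coordinates, every triadic
context I and every triset X of it, σ_q (σ_p X) = σ_p X; i.e. σ_p X is a fixed
point of every σ_q. -/
theorem sigma_fixed_point {α : Type*} (p q : Equiv.Perm (Fin 3))
    (I : Set (Fin 3 → α)) (X : Fin 3 → Set α) (hX : IsTriset3 I X) :
    sigmaOp q I (sigmaOp p I X) = sigmaOp p I X :=
  SigmaAux.full_fixed q I _ (SigmaAux.full_sigma p I X hX)
end

section
/- For every pair of distinct permutations p ≠ q of (1, 2, 3), the operators σ_p and σ_q do not commute: there exist a triadic context K and a triset t of K such that σ_p(σ_q(t)) ≠ σ_q(σ_p(t)). -/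
/-! ### Boolean computational model -/

/-- Boolean version of `triAt`, taking a plain function `v : Fin 3 → Fin 3`. -/
def vtri (v : Fin 3 → Fin 3) (a b c : Fin 2) : Fin 3 → Fin 2 :=
  fun n => if n = v 0 then a else if n = v 1 then b else c

/-- Boolean version of `sigmaOp`. -/
def dSig (v : Fin 3 → Fin 3) (I : (Fin 3 → Fin 2) → Bool)
    (X : Fin 3 → Fin 2 → Bool) : Fin 3 → Fin 2 → Bool :=
  let Yi : Fin 2 → Bool := fun a =>
    decide (∀ b, X (v 1) b = true → ∀ c, X (v 2) c = true → I (vtri v a b c) = true)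
  let Yj : Fin 2 → Bool := fun b =>
    decide (∀ a, Yi a = true → ∀ c, X (v 2) c = true → I (vtri v a b c) = true)
  let Yk : Fin 2 → Bool := fun c =>
    decide (∀ a, Yi a = true → ∀ b, Yj b = true → I (vtri v a b c) = true)
  fun n => if n = v 0 then Yi else if n = v 1 then Yj else Yk

lemma sigmaOp_eq (p : Equiv.Perm (Fin 3)) (I : (Fin 3 → Fin 2) → Bool)
    (X : Fin 3 → Fin 2 → Bool) :
    sigmaOp p {f | I f = true} (fun i => {a | X i a = true})
      = fun n => {a | dSig (⇑p) I X n a = true} := by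
  have hv : ∀ a b c, triAt p a b c = vtri (⇑p) a b c := fun _ _ _ => rfl
  funext n
  ext a
  simp only [sigmaOp, dSig, hv]
  split_ifs <;> simp only [Set.mem_setOf_eq, decide_eq_true_eq]

/-- the empty context -/
def dI0 : (Fin 3 → Fin 2) → Bool := fun _ => false

/-- the candidate trisets -/
def dXc (t : Fin 3) : Fin 3 → Fin 2 → Bool := fun i a => decide (i = t) && decide (a = 0)

def goodT (v w : Fin 3 → Fin 3) (t : Fin 3) : Bool :=
  decide (∀ f : Fin 3 → Fin 2, (∀ i, dXc t i (f i) = true) → dI0 f = true) &&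
  decide (dSig v dI0 (dSig w dI0 (dXc t)) ≠ dSig w dI0 (dSig v dI0 (dXc t)))

lemma master : ∀ v w : Fin 3 → Fin 3, Function.Injective v → Function.Injective w →
    v ≠ w → ∃ t, goodT v w t = true := by decide

lemma setOf_eq_imp {F G : Fin 3 → Fin 2 → Bool}
    (h : (fun n => {a | F n a = true}) = fun n => {a | G n a = true}) : F = G := by
  funext n a
  have h2 := Set.ext_iff.mp (congrFun h n) a
  simp only [Set.mem_setOf_eq] at h2
  by_cases hF : F n a = true
  · rw [hF, (h2.mp hF)]
  · simp only [Bool.not_eq_true] at hF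
    rw [hF]
    cases hG : G n a
    · rfl
    · exact absurd (h2.mpr hG) (by simp [hF])

/-- for distinct permutations p ≠ q of the coordinates, the
operators σ_p and σ_q do not commute: there are a triadic context and a triset
of it on which the two compositions differ. -/
theorem sigma_not_commutative (p q : Equiv.Perm (Fin 3)) (hpq : p ≠ q) :
    ∃ (α : Type) (I : Set (Fin 3 → α)) (X : Fin 3 → Set α),
      IsTriset3 I X ∧ sigmaOp p I (sigmaOp q I X) ≠ sigmaOp q I (sigmaOp p I X) := by
  have hne : (⇑p : Fin 3 → Fin 3) ≠ ⇑q := fun h => hpq (Equiv.coe_fn_injective h)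
  obtain ⟨t, ht⟩ := master (⇑p) (⇑q) p.injective q.injective hne
  rw [goodT, Bool.and_eq_true, decide_eq_true_eq, decide_eq_true_eq] at ht
  obtain ⟨htri, hneq⟩ := ht
  refine ⟨Fin 2, {f | dI0 f = true}, fun i => {a | dXc t i a = true}, ?_, ?_⟩
  · intro f hf
    exact htri f hf
  · intro h
    apply hneq
    apply setOf_eq_imp
    calc (fun n => {a | dSig (⇑p) dI0 (dSig (⇑q) dI0 (dXc t)) n a = true})
        = sigmaOp p {f | dI0 f = true}
            (fun i => {a | dSig (⇑q) dI0 (dXc t) i a = true}) := (sigmaOp_eq p dI0 _).symm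
      _ = sigmaOp p {f | dI0 f = true}
            (sigmaOp q {f | dI0 f = true} (fun i => {a | dXc t i a = true})) := by
            rw [sigmaOp_eq q dI0 (dXc t)]
      _ = sigmaOp q {f | dI0 f = true}
            (sigmaOp p {f | dI0 f = true} (fun i => {a | dXc t i a = true})) := h
      _ = (fun n => {a | dSig (⇑q) dI0 (dSig (⇑p) dI0 (dXc t)) n a = true}) := by
            rw [sigmaOp_eq p dI0 (dXc t), sigmaOp_eq q dI0]
end

section
/- Let K = (G, M, B, I) be a triadic context having two distinct triconcepts c₁ = (X₁, Y₁, Z₁) and c₂ = (X₁, Y₂, Z₂) with the same first component such that X₁, Y₁ ∩ Y₂ and Z₁ ∩ Z₂ are all nonempty. Then there is no map σ from the trisets of K to the trisets of K that is simultaneously (i) extensive (t ⊑ σ(t) for every triset t), (ii) monotone with respect to ⊑, and (iii) such that σ(t) is a triconcept of K for every triset t. -/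

lemma triLE_comp {G M B : Type*} {s t : Set G × Set M × Set B} (h : TriLE s t)
    (h1 : s.1.Nonempty) (h2 : s.2.1.Nonempty) (h3 : s.2.2.Nonempty) :
    s.1 ⊆ t.1 ∧ s.2.1 ⊆ t.2.1 ∧ s.2.2 ⊆ t.2.2 := by
  obtain ⟨x, hx⟩ := h1
  obtain ⟨y, hy⟩ := h2
  obtain ⟨z, hz⟩ := h3
  refine ⟨fun a ha => ?_, fun b hb => ?_, fun c hc => ?_⟩
  · exact (h (show ((a, y, z) : G × M × B) ∈ _ from ⟨ha, hy, hz⟩)).1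
  · exact (h (show ((x, b, z) : G × M × B) ∈ _ from ⟨hx, hb, hz⟩)).2.1
  · exact (h (show ((x, y, c) : G × M × B) ∈ _ from ⟨hx, hy, hc⟩)).2.2

lemma comp_triLE {G M B : Type*} {s t : Set G × Set M × Set B}
    (h1 : s.1 ⊆ t.1) (h2 : s.2.1 ⊆ t.2.1) (h3 : s.2.2 ⊆ t.2.2) : TriLE s t := by
  rintro ⟨a, b, c⟩ ⟨ha, hb, hc⟩
  exact ⟨h1 ha, h2 hb, h3 hc⟩

/-- if K has two distinct triconcepts (X1, Y1, Z1) and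
(X1, Y2, Z2) with the same first component such that X1, Y1 ∩ Y2 and Z1 ∩ Z2
are all nonempty, then there is no map from trisets of K to trisets of K that
is simultaneously extensive, monotone with respect to the triset order, and
triconcept-valued. -/
theorem no_closure_operator {G M B : Type*} (I : G → M → B → Prop)
    (X1 : Set G) (Y1 Y2 : Set M) (Z1 Z2 : Set B)
    (hc1 : IsTriconcept I (X1, Y1, Z1)) (hc2 : IsTriconcept I (X1, Y2, Z2))
    (hne : ((X1, Y1, Z1) : Set G × Set M × Set B) ≠ (X1, Y2, Z2))
    (hX : X1.Nonempty) (hY : (Y1 ∩ Y2).Nonempty) (hZ : (Z1 ∩ Z2).Nonempty) :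
    ¬ ∃ σ : Set G × Set M × Set B → Set G × Set M × Set B,
        (∀ t, IsTriset I t → IsTriset I (σ t)) ∧
        (∀ t, IsTriset I t → TriLE t (σ t)) ∧
        (∀ s t, IsTriset I s → IsTriset I t → TriLE s t → TriLE (σ s) (σ t)) ∧
        (∀ t, IsTriset I t → IsTriconcept I (σ t)) := by
  rintro ⟨σ, hts, hext, hmono, hconc⟩
  set t : Set G × Set M × Set B := (X1, Y1 ∩ Y2, Z1 ∩ Z2) with ht
  have htset : IsTriset I t := fun x hx y hy z hz => hc1.1 x hx y hy.1 z hz.1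
  have h1set : IsTriset I (X1, Y1, Z1) := hc1.1
  have h2set : IsTriset I (X1, Y2, Z2) := hc2.1
  -- σ fixes the two triconcepts
  have hY1 : Y1.Nonempty := ⟨hY.choose, hY.choose_spec.1⟩
  have hY2 : Y2.Nonempty := ⟨hY.choose, hY.choose_spec.2⟩
  have hZ1 : Z1.Nonempty := ⟨hZ.choose, hZ.choose_spec.1⟩
  have hZ2 : Z2.Nonempty := ⟨hZ.choose, hZ.choose_spec.2⟩
  have hfix1 : σ (X1, Y1, Z1) = (X1, Y1, Z1) := by
    have hle := triLE_comp (hext _ h1set) hX hY1 hZ1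
    exact hc1.2 _ (hts _ h1set) hle.1 hle.2.1 hle.2.2
  have hfix2 : σ (X1, Y2, Z2) = (X1, Y2, Z2) := by
    have hle := triLE_comp (hext _ h2set) hX hY2 hZ2
    exact hc2.2 _ (hts _ h2set) hle.1 hle.2.1 hle.2.2
  -- σ t lies componentwise between t and both concepts
  have hle := triLE_comp (hext t htset) hX hY hZ
  have hσX : (σ t).1.Nonempty := hX.mono hle.1
  have hσY : (σ t).2.1.Nonempty := hY.mono hle.2.1
  have hσZ : (σ t).2.2.Nonempty := hZ.mono hle.2.2
  have hm1 : TriLE (σ t) (X1, Y1, Z1) := by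
    have := hmono t (X1, Y1, Z1) htset h1set
      (comp_triLE (subset_refl _) Set.inter_subset_left Set.inter_subset_left)
    rw [hfix1] at this; exact this
  have hm2 : TriLE (σ t) (X1, Y2, Z2) := by
    have := hmono t (X1, Y2, Z2) htset h2set
      (comp_triLE (subset_refl _) Set.inter_subset_right Set.inter_subset_right)
    rw [hfix2] at this; exact this
  have hc1' := triLE_comp hm1 hσX hσY hσZ
  have hc2' := triLE_comp hm2 hσX hσY hσZ
  -- hence σ t = t
  have hσt : σ t = t := by
    have : IsTriconcept I (σ t) := hconc t htset
    apply Prod.ext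
    · exact subset_antisymm hc1'.1 hle.1
    · apply Prod.ext
      · exact subset_antisymm (Set.subset_inter hc1'.2.1 hc2'.2.1) hle.2.1
      · exact subset_antisymm (Set.subset_inter hc1'.2.2 hc2'.2.2) hle.2.2
  -- so t is a triconcept, forcing c₁ = t = c₂
  have htconc : IsTriconcept I t := hσt ▸ hconc t htset
  have he1 : (X1, Y1, Z1) = t :=
    htconc.2 _ h1set (subset_refl _) Set.inter_subset_left Set.inter_subset_left
  have he2 : (X1, Y2, Z2) = t :=
    htconc.2 _ h2set (subset_refl _) Set.inter_subset_right Set.inter_subset_right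
  exact hne (he1.trans he2.symm)
end

section
/- Let K = (G, M, B, I) be a triadic context with G, M, B finite and pairwise disjoint, let E = G ∪ M ∪ B, and suppose K possesses at least one switching generator. Then the set system F = {S ⊆ E : (S ∩ G, S ∩ M, S ∩ B) is a triset of K and is not a switching generator of K} is not an independence system (there exist X ⊆ Y with Y ∈ F but X ∉ F) and is not closed under intersection (there exist X, Y ∈ F with X ∩ Y ∉ F). -/
variable {E : Type*}

/-- A triset of the triadic context (G, M, B, I), where G, M, B are subsets of
a common ground type: X ⊆ G, Y ⊆ M, Z ⊆ B and X × Y × Z ⊆ I. -/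
def IsTrisetIn (G M B : Set E) (I : Set (E × E × E)) (X Y Z : Set E) : Prop :=
  X ⊆ G ∧ Y ⊆ M ∧ Z ⊆ B ∧ ∀ x ∈ X, ∀ y ∈ Y, ∀ z ∈ Z, (x, y, z) ∈ I

/-- A triconcept: a triset maximal w.r.t. componentwise inclusion among
trisets. -/
def IsTriconceptIn (G M B : Set E) (I : Set (E × E × E)) (X Y Z : Set E) : Prop :=
  IsTrisetIn G M B I X Y Z ∧
    ∀ X' Y' Z' : Set E, IsTrisetIn G M B I X' Y' Z' →
      X ⊆ X' → Y ⊆ Y' → Z ⊆ Z' → X' = X ∧ Y' = Y ∧ Z' = Z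

/-- A switching generator: the componentwise intersection of two distinct
triconcepts, having at least one nonempty component. -/
def IsSwitchGenIn (G M B : Set E) (I : Set (E × E × E)) (X Y Z : Set E) : Prop :=
  ∃ A₁ A₂ A₃ B₁ B₂ B₃ : Set E,
    IsTriconceptIn G M B I A₁ A₂ A₃ ∧ IsTriconceptIn G M B I B₁ B₂ B₃ ∧
    (A₁, A₂, A₃) ≠ (B₁, B₂, B₃) ∧
    X = A₁ ∩ B₁ ∧ Y = A₂ ∩ B₂ ∧ Z = A₃ ∩ B₃ ∧
    (X.Nonempty ∨ Y.Nonempty ∨ Z.Nonempty)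

/-- The set system F of all subsets S of the ground set E = G ∪ M ∪ B whose
triple of traces (S ∩ G, S ∩ M, S ∩ B) is a triset of K and is not a switching
generator of K. -/
def SysF (G M B : Set E) (I : Set (E × E × E)) : Set (Set E) :=
  {S | S ⊆ G ∪ M ∪ B ∧ IsTrisetIn G M B I (S ∩ G) (S ∩ M) (S ∩ B) ∧
    ¬ IsSwitchGenIn G M B I (S ∩ G) (S ∩ M) (S ∩ B)}


lemma trace_eq {G M B X Y Z : Set E}
    (hGM : Disjoint G M) (hGB : Disjoint G B) (hMB : Disjoint M B)
    (hX : X ⊆ G) (hY : Y ⊆ M) (hZ : Z ⊆ B) :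
    (X ∪ Y ∪ Z) ∩ G = X ∧ (X ∪ Y ∪ Z) ∩ M = Y ∧ (X ∪ Y ∪ Z) ∩ B = Z := by
  refine ⟨?_, ?_, ?_⟩ <;> ext e <;>
    simp only [Set.mem_inter_iff, Set.mem_union] <;> constructor
  · rintro ⟨(h | h) | h, hg⟩
    · exact h
    · exact absurd hg (Set.disjoint_left.mp hGM.symm (hY h))
    · exact absurd hg (Set.disjoint_left.mp hGB.symm (hZ h))
  · exact fun h => ⟨Or.inl (Or.inl h), hX h⟩
  · rintro ⟨(h | h) | h, hg⟩
    · exact absurd hg (Set.disjoint_left.mp hGM (hX h))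
    · exact h
    · exact absurd hg (Set.disjoint_left.mp hMB.symm (hZ h))
  · exact fun h => ⟨Or.inl (Or.inr h), hY h⟩
  · rintro ⟨(h | h) | h, hg⟩
    · exact absurd hg (Set.disjoint_left.mp hGB (hX h))
    · exact absurd hg (Set.disjoint_left.mp hMB (hY h))
    · exact h
  · exact fun h => ⟨Or.inr h, hZ h⟩

lemma tricon_not_sg {G M B : Set E} {I : Set (E × E × E)} {A₁ A₂ A₃ : Set E}
    (h : IsTriconceptIn G M B I A₁ A₂ A₃) : ¬ IsSwitchGenIn G M B I A₁ A₂ A₃ := by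
  rintro ⟨C₁, C₂, C₃, D₁, D₂, D₃, hC, hD, hne, h1, h2, h3, -⟩
  obtain ⟨hA, hmax⟩ := h
  have hC' := hmax C₁ C₂ C₃ hC.1 (h1 ▸ Set.inter_subset_left)
    (h2 ▸ Set.inter_subset_left) (h3 ▸ Set.inter_subset_left)
  have hD' := hmax D₁ D₂ D₃ hD.1 (h1 ▸ Set.inter_subset_right)
    (h2 ▸ Set.inter_subset_right) (h3 ▸ Set.inter_subset_right)
  exact hne (by rw [hC'.1, hC'.2.1, hC'.2.2, hD'.1, hD'.2.1, hD'.2.2])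

lemma tricon_mem_sysF {G M B : Set E} {I : Set (E × E × E)} {A₁ A₂ A₃ : Set E}
    (hGM : Disjoint G M) (hGB : Disjoint G B) (hMB : Disjoint M B)
    (h : IsTriconceptIn G M B I A₁ A₂ A₃) : A₁ ∪ A₂ ∪ A₃ ∈ SysF G M B I := by
  have h1 := h.1.1; have h2 := h.1.2.1; have h3 := h.1.2.2.1
  obtain ⟨t1, t2, t3⟩ := trace_eq hGM hGB hMB h1 h2 h3
  refine ⟨?_, ?_, ?_⟩
  · exact Set.union_subset (Set.union_subset (h1.trans (by intro x hx; exact Or.inl (Or.inl hx)))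
      (h2.trans (by intro x hx; exact Or.inl (Or.inr hx)))) (h3.trans (by intro x hx; exact Or.inr hx))
  · rw [t1, t2, t3]; exact h.1
  · rw [t1, t2, t3]; exact tricon_not_sg h

/-- if K has at least one switching generator, then F is not an
independence system and is not closed under intersection. -/
theorem sysF_not_independent_not_intersection_closed {E : Type*} (G M B : Set E) (I : Set (E × E × E))
    (hG : G.Finite) (hM : M.Finite) (hB : B.Finite)
    (hGM : Disjoint G M) (hGB : Disjoint G B) (hMB : Disjoint M B)
    (hI : I ⊆ G ×ˢ M ×ˢ B)
    (hsg : ∃ X Y Z : Set E, IsSwitchGenIn G M B I X Y Z) :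
    (∃ X Y : Set E, X ⊆ Y ∧ Y ∈ SysF G M B I ∧ X ∉ SysF G M B I) ∧
    (∃ X Y : Set E, X ∈ SysF G M B I ∧ Y ∈ SysF G M B I ∧
      X ∩ Y ∉ SysF G M B I) := by

  obtain ⟨X, Y, Z, hXYZ⟩ := hsg
  obtain ⟨A₁, A₂, A₃, B₁, B₂, B₃, hA, hB, hne, e1, e2, e3, hnonemp⟩ := hXYZ
  have hXG : X ⊆ G := e1 ▸ Set.inter_subset_left.trans hA.1.1
  have hYM : Y ⊆ M := e2 ▸ Set.inter_subset_left.trans hA.1.2.1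
  have hZB : Z ⊆ B := e3 ▸ Set.inter_subset_left.trans hA.1.2.2.1
  obtain ⟨s1, s2, s3⟩ := trace_eq hGM hGB hMB hXG hYM hZB
  have hSGxyz : IsSwitchGenIn G M B I X Y Z :=
    ⟨A₁, A₂, A₃, B₁, B₂, B₃, hA, hB, hne, e1, e2, e3, hnonemp⟩
  have hXnot : (X ∪ Y ∪ Z) ∉ SysF G M B I := by
    rintro ⟨-, -, hns⟩
    rw [s1, s2, s3] at hns
    exact hns hSGxyz
  constructor
  · refine ⟨X ∪ Y ∪ Z, A₁ ∪ A₂ ∪ A₃, ?_, tricon_mem_sysF hGM hGB hMB hA, hXnot⟩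
    refine Set.union_subset (Set.union_subset ?_ ?_) ?_
    · exact (e1 ▸ Set.inter_subset_left).trans (fun x hx => Or.inl (Or.inl hx))
    · exact (e2 ▸ Set.inter_subset_left).trans (fun x hx => Or.inl (Or.inr hx))
    · exact (e3 ▸ Set.inter_subset_left).trans (fun x hx => Or.inr hx)
  · refine ⟨A₁ ∪ A₂ ∪ A₃, B₁ ∪ B₂ ∪ B₃, tricon_mem_sysF hGM hGB hMB hA,
      tricon_mem_sysF hGM hGB hMB hB, ?_⟩
    obtain ⟨a1, a2, a3⟩ := trace_eq hGM hGB hMB hA.1.1 hA.1.2.1 hA.1.2.2.1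
    obtain ⟨b1, b2, b3⟩ := trace_eq hGM hGB hMB hB.1.1 hB.1.2.1 hB.1.2.2.1
    rintro ⟨-, -, hns⟩
    apply hns
    have g1 : (A₁ ∪ A₂ ∪ A₃) ∩ (B₁ ∪ B₂ ∪ B₃) ∩ G = A₁ ∩ B₁ := by
      rw [show (A₁ ∪ A₂ ∪ A₃) ∩ (B₁ ∪ B₂ ∪ B₃) ∩ G
          = ((A₁ ∪ A₂ ∪ A₃) ∩ G) ∩ ((B₁ ∪ B₂ ∪ B₃) ∩ G) by
        ext e; simp only [Set.mem_inter_iff]; tauto, a1, b1]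
    have g2 : (A₁ ∪ A₂ ∪ A₃) ∩ (B₁ ∪ B₂ ∪ B₃) ∩ M = A₂ ∩ B₂ := by
      rw [show (A₁ ∪ A₂ ∪ A₃) ∩ (B₁ ∪ B₂ ∪ B₃) ∩ M
          = ((A₁ ∪ A₂ ∪ A₃) ∩ M) ∩ ((B₁ ∪ B₂ ∪ B₃) ∩ M) by
        ext e; simp only [Set.mem_inter_iff]; tauto, a2, b2]
    have g3 : (A₁ ∪ A₂ ∪ A₃) ∩ (B₁ ∪ B₂ ∪ B₃) ∩ B = A₃ ∩ B₃ := by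
      rw [show (A₁ ∪ A₂ ∪ A₃) ∩ (B₁ ∪ B₂ ∪ B₃) ∩ B
          = ((A₁ ∪ A₂ ∪ A₃) ∩ B) ∩ ((B₁ ∪ B₂ ∪ B₃) ∩ B) by
        ext e; simp only [Set.mem_inter_iff]; tauto, a3, b3]
    rw [g1, g2, g3]
    exact ⟨A₁, A₂, A₃, B₁, B₂, B₃, hA, hB, hne, rfl, rfl, rfl,
      e1 ▸ e2 ▸ e3 ▸ hnonemp⟩
end
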